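/- arXiv:math/0406032 — 6 statements merged into one kernel-verified Lean document; each statement's English description precedes it below -/
import Mathlib

section
/- Let (X, μ) be a finite measure space, let f : X → ℝ be a bounded measurable function, and let (f_k) be a sequence of measurable functions X → ℝ that is uniformly bounded (there is a constant C with |f_k(x)| ≤ C for all k and all x). If (i) lim_k ∫_X f_k dμ = ∫_X f dμ and (ii) limsup_k f_k(x) ≤ f(x) for every x ∈ X, then f_k converges to f in L¹(X, μ), i.e. lim_k ∫_X |f_k − f| dμ = 0. -/
open Filter MeasureTheory

/-- On a finite measure space, if a uniformly bounded sequence of measurable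
functions `f_k` satisfies `∫ f_k → ∫ f` and `limsup_k f_k(x) ≤ f(x)` pointwise, where `f` is a
bounded measurable function, then `f_k → f` in `L¹`. -/
theorem bergman_L1_convergence_lemma
    {X : Type*} [MeasurableSpace X] (μ : Measure X) [IsFiniteMeasure μ]
    (f : X → ℝ) (fk : ℕ → X → ℝ) (Cf C : ℝ)
    (hf_meas : Measurable f) (hf_bdd : ∀ x, |f x| ≤ Cf)
    (hfk_meas : ∀ k, Measurable (fk k))
    (hfk_bdd : ∀ k x, |fk k x| ≤ C)
    (hi : Tendsto (fun k => ∫ x, fk k x ∂μ) atTop (nhds (∫ x, f x ∂μ)))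
    (hii : ∀ x, Filter.limsup (fun k => fk k x) atTop ≤ f x) :
    Tendsto (fun k => ∫ x, |fk k x - f x| ∂μ) atTop (nhds 0) := by
  -- integrability
  have hf_int : Integrable f μ :=
    Integrable.mono' (integrable_const Cf) hf_meas.aestronglyMeasurable
      (ae_of_all _ fun x => by simpa [Real.norm_eq_abs] using hf_bdd x)
  have hfk_int : ∀ k, Integrable (fk k) μ := fun k =>
    Integrable.mono' (integrable_const C) (hfk_meas k).aestronglyMeasurable
      (ae_of_all _ fun x => by simpa [Real.norm_eq_abs] using hfk_bdd k x)
  set g : ℕ → X → ℝ := fun k x => max (fk k x - f x) 0 with hg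
  have hg_meas : ∀ k, Measurable (g k) := fun k =>
    ((hfk_meas k).sub hf_meas).max measurable_const
  have hg_bound : ∀ k x, |g k x| ≤ C + Cf := by
    intro k x
    rw [abs_of_nonneg (le_max_right _ _)]
    have h1 := (abs_le.1 (hfk_bdd k x)).2
    have h2 := (abs_le.1 (hf_bdd x)).1
    have h3 := (abs_nonneg (fk k x)).trans (hfk_bdd k x)
    have h4 := (abs_nonneg (f x)).trans (hf_bdd x)
    exact max_le (by linarith) (by linarith)
  -- pointwise convergence of g to 0
  have hg_tendsto : ∀ x, Tendsto (fun k => g k x) atTop (nhds 0) := by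
    intro x
    rw [NormedAddCommGroup.tendsto_nhds_zero]
    intro ε hε
    have hb : IsBoundedUnder (· ≤ ·) atTop (fun k => fk k x) :=
      isBoundedUnder_of ⟨C, fun k => (abs_le.1 (hfk_bdd k x)).2⟩
    have h1 : ∀ᶠ k in atTop, fk k x < f x + ε :=
      eventually_lt_of_limsup_lt (lt_of_le_of_lt (hii x) (by linarith)) hb
    filter_upwards [h1] with k hk
    rw [Real.norm_eq_abs, abs_of_nonneg (le_max_right _ _)]
    exact max_lt (by linarith) hε
  -- dominated convergence for g
  have hg_int_tendsto : Tendsto (fun k => ∫ x, g k x ∂μ) atTop (nhds 0) := by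
    have := MeasureTheory.tendsto_integral_of_dominated_convergence (μ := μ)
      (fun _ => C + Cf) (fun k => (hg_meas k).aestronglyMeasurable)
      (integrable_const (C + Cf))
      (fun k => ae_of_all _ fun x => by simpa [Real.norm_eq_abs] using hg_bound k x)
      (ae_of_all _ hg_tendsto)
    simpa using this
  -- |fk - f| = 2 g - (fk - f)
  have key : ∀ k, (∫ x, |fk k x - f x| ∂μ)
      = 2 * (∫ x, g k x ∂μ) - ((∫ x, fk k x ∂μ) - ∫ x, f x ∂μ) := by
    intro k
    have hgi : Integrable (g k) μ :=
      Integrable.mono' (integrable_const (C + Cf)) (hg_meas k).aestronglyMeasurable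
        (ae_of_all _ fun x => by simpa [Real.norm_eq_abs] using hg_bound k x)
    have : (∫ x, |fk k x - f x| ∂μ) = ∫ x, (2 * g k x - (fk k x - f x)) ∂μ := by
      congr 1; ext x
      rcases le_total (fk k x - f x) 0 with h | h
      · simp [hg, max_eq_right h, abs_of_nonpos h]
      · simp [hg, max_eq_left h, abs_of_nonneg h]; ring
    rw [this,
      integral_sub (f := fun x => 2 * g k x) (g := fun x => fk k x - f x)
        (hgi.const_mul 2) ((hfk_int k).sub hf_int),
      MeasureTheory.integral_const_mul,
      integral_sub (f := fun x => fk k x) (g := fun x => f x) (hfk_int k) hf_int]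
  have : Tendsto (fun k => 2 * (∫ x, g k x ∂μ) - ((∫ x, fk k x ∂μ) - ∫ x, f x ∂μ))
      atTop (nhds 0) := by
    have h1 := (hg_int_tendsto.const_mul 2).sub (hi.sub_const (∫ x, f x ∂μ))
    simpa using h1
  simpa only [key] using this
end

section
/- For each natural number k let t_k : J_k → ℝ be a finite family of real numbers with 0 ≤ t_{k,j} ≤ 1 for all j, let c_k ≥ 0 be real numbers, and let A ∈ ℝ. Suppose that lim_k c_k · Σ_{j ∈ J_k} t_{k,j}(1 − t_{k,j}) = 0 and lim_k c_k · Σ_{j ∈ J_k} t_{k,j} = A. Then for every γ with 0 < γ < 1, lim_k c_k · #{ j ∈ J_k : t_{k,j} > γ } = A. -/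
open Filter

/-- If `t_{k,j} ∈ [0,1]`, `c_k ≥ 0`, `c_k · Σ_j t_{k,j}(1 - t_{k,j}) → 0` and
`c_k · Σ_j t_{k,j} → A`, then for every `0 < γ < 1` the normalized counting function
`c_k · #{j : t_{k,j} > γ}` also tends to `A`. -/
theorem eigenvalue_counting_from_idempotent_trace
    {J : ℕ → Type*} [∀ k, Fintype (J k)]
    (t : ∀ k, J k → ℝ) (c : ℕ → ℝ) (A : ℝ)
    (ht0 : ∀ k j, 0 ≤ t k j) (ht1 : ∀ k j, t k j ≤ 1)
    (hc : ∀ k, 0 ≤ c k)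
    (h1 : Tendsto (fun k => c k * ∑ j, t k j * (1 - t k j)) atTop (nhds 0))
    (h2 : Tendsto (fun k => c k * ∑ j, t k j) atTop (nhds A)) :
    ∀ γ : ℝ, 0 < γ → γ < 1 →
      Tendsto (fun k => c k * ((Finset.univ.filter fun j => γ < t k j).card : ℝ))
        atTop (nhds A) := by
  intro γ hγ0 hγ1
  set M : ℝ := max (1/γ) (1/(1-γ)) with hM
  have hMpos : 0 < M := lt_of_lt_of_le (one_div_pos.mpr hγ0) (le_max_left _ _)
  -- pointwise bound
  have key : ∀ k, |c k * ((Finset.univ.filter fun j => γ < t k j).card : ℝ)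
      - c k * ∑ j, t k j| ≤ M * (c k * ∑ j, t k j * (1 - t k j)) := by
    intro k
    have hcard : ((Finset.univ.filter fun j => γ < t k j).card : ℝ)
        = ∑ j, (if γ < t k j then (1:ℝ) else 0) := by
      simp [Finset.sum_boole]
    rw [hcard, ← mul_sub, ← Finset.sum_sub_distrib, abs_mul, abs_of_nonneg (hc k),
      mul_comm M, mul_assoc]
    refine mul_le_mul_of_nonneg_left ?_ (hc k)
    calc |∑ j, ((if γ < t k j then (1:ℝ) else 0) - t k j)|
        ≤ ∑ j, |(if γ < t k j then (1:ℝ) else 0) - t k j| := Finset.abs_sum_le_sum_abs _ _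
      _ ≤ ∑ j, M * (t k j * (1 - t k j)) := by
          refine Finset.sum_le_sum fun j _ => ?_
          have h0 := ht0 k j
          have h1j := ht1 k j
          by_cases h : γ < t k j
          · simp only [h, if_pos]
            rw [abs_of_nonneg (by linarith)]
            have hle : 1/γ ≤ M := le_max_left _ _
            have : 1 - t k j ≤ (1/γ) * (t k j * (1 - t k j)) := by
              rw [one_div, inv_mul_eq_div, le_div_iff₀ hγ0]
              nlinarith
            calc 1 - t k j ≤ (1/γ) * (t k j * (1 - t k j)) := this
              _ ≤ M * (t k j * (1 - t k j)) :=
                  mul_le_mul_of_nonneg_right hle (by nlinarith)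
          · simp only [h, if_neg, not_false_iff]
            rw [abs_of_nonpos (by linarith), neg_sub, sub_zero]
            have hle : 1/(1-γ) ≤ M := le_max_right _ _
            have htγ : t k j ≤ γ := le_of_not_gt h
            have : t k j ≤ (1/(1-γ)) * (t k j * (1 - t k j)) := by
              rw [one_div, inv_mul_eq_div, le_div_iff₀ (by linarith : (0:ℝ) < 1 - γ)]
              nlinarith
            calc t k j ≤ (1/(1-γ)) * (t k j * (1 - t k j)) := this
              _ ≤ M * (t k j * (1 - t k j)) :=
                  mul_le_mul_of_nonneg_right hle (by nlinarith)
      _ = M * ∑ j, t k j * (1 - t k j) := (Finset.mul_sum ..).symm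
      _ = (∑ j, t k j * (1 - t k j)) * M := mul_comm _ _
  have hzero : Tendsto (fun k => c k * ((Finset.univ.filter fun j => γ < t k j).card : ℝ)
      - c k * ∑ j, t k j) atTop (nhds 0) := by
    have hM0 : Tendsto (fun k => M * (c k * ∑ j, t k j * (1 - t k j))) atTop (nhds 0) := by
      simpa using h1.const_mul M
    exact squeeze_zero_norm (fun k => key k) hM0
  have := hzero.add h2
  simpa using this
end

section
/- Let X be a set and H a finite-dimensional complex subspace of the space of functions X → ℂ (with pointwise operations), equipped with an inner product making H a complex inner product space. For an orthonormal basis (ψ_i) of H define the Bergman kernel K(x,y) := Σ_i ψ_i(x) · conj(ψ_i(y)) and the Bergman function B(x) := Σ_i |ψ_i(x)|². Fix x ∈ X and let α ∈ H be an extremal at x, i.e. ‖α‖ = 1 and |α(x)|² = B(x). Then for every y ∈ X, |K(x,y)|² = |α(y)|² · B(x). -/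
/-!
Evaluation at `x` is represented by the vector `v = ∑ i, conj (ψ i x) • ψ i`: `⟪v, β⟫ = β x`.
Hence `B(x) = ‖v‖²` and `K(x, y) = conj (v y)`. An extremal `α` attains equality in
Cauchy–Schwarz for `|α(x)| = |⟪v, α⟫| ≤ ‖v‖`, so it is a multiple `r • v` with `‖r‖ ‖v‖ = 1`,
and then `|α(y)| ‖v‖ = |v(y)|` for every `y`.
-/

open scoped InnerProductSpace ComplexConjugate

section CauchySchwarz

variable {𝕜 E F : Type*} [RCLike 𝕜] [NormedAddCommGroup E] [InnerProductSpace 𝕜 E]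
  [NormedAddCommGroup F] [NormedSpace 𝕜 F]

theorem norm_map_mul_norm_eq_of_norm_inner_eq_norm {u v : E} (hu : ‖u‖ = 1)
    (h : ‖⟪v, u⟫_𝕜‖ = ‖v‖) (f : E →ₗ[𝕜] F) : ‖f u‖ * ‖v‖ = ‖f v‖ := by
  have hcs : ‖⟪v, u⟫_𝕜‖ = ‖v‖ * ‖u‖ := by rw [h, hu, mul_one]
  rcases (norm_inner_eq_norm_tfae 𝕜 v u).out 0 2 |>.mp hcs with rfl | ⟨r, rfl⟩
  · simp
  · rw [norm_smul] at hu
    rw [map_smul, norm_smul, mul_right_comm, hu, one_mul]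

end CauchySchwarz

section BergmanVector

variable {𝕜 X E κ : Type*} [RCLike 𝕜] [NormedAddCommGroup E] [InnerProductSpace 𝕜 E]
  [Fintype κ] (ι : E →ₗ[𝕜] (X → 𝕜)) (ψ : OrthonormalBasis κ 𝕜 E)

/-- The Riesz representative of evaluation at `x`. -/
noncomputable def bergmanVector (x : X) : E :=
  ∑ i, conj (ι (ψ i) x) • ψ i

theorem bergmanVector_apply (x y : X) :
    ι (bergmanVector ι ψ x) y = ∑ i, conj (ι (ψ i) x) * ι (ψ i) y := by
  simp [bergmanVector, Finset.sum_apply]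

theorem inner_bergmanVector (x : X) (β : E) : ⟪bergmanVector ι ψ x, β⟫_𝕜 = ι β x := by
  conv_rhs => rw [← ψ.sum_repr' β]
  simp [bergmanVector, sum_inner, inner_smul_left, Finset.sum_apply, mul_comm]

theorem norm_sq_bergmanVector (x : X) :
    ‖bergmanVector ι ψ x‖ ^ 2 = ∑ i, ‖ι (ψ i) x‖ ^ 2 := by
  rw [← inner_self_eq_norm_sq (𝕜 := 𝕜), inner_bergmanVector, bergmanVector_apply, map_sum]
  simp only [RCLike.conj_mul, ← RCLike.ofReal_pow, RCLike.ofReal_re]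

theorem norm_bergmanKernel_eq (x y : X) :
    ‖∑ i, ι (ψ i) x * conj (ι (ψ i) y)‖ = ‖ι (bergmanVector ι ψ x) y‖ := by
  rw [bergmanVector_apply, ← RCLike.norm_conj, map_sum]
  simp

end BergmanVector

theorem bergman_kernel_via_extremal_general
    {X E : Type*} [NormedAddCommGroup E] [InnerProductSpace ℂ E]
    (ι : E →ₗ[ℂ] (X → ℂ))
    {n : ℕ} (ψ : OrthonormalBasis (Fin n) ℂ E)
    (x : X) (α : E) (hα : ‖α‖ = 1)
    (hext : ‖ι α x‖ ^ 2 = ∑ i, ‖ι (ψ i) x‖ ^ 2) :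
    ∀ y : X,
      ‖∑ i, ι (ψ i) x * (starRingEnd ℂ) (ι (ψ i) y)‖ ^ 2
        = ‖ι α y‖ ^ 2 * ∑ i, ‖ι (ψ i) x‖ ^ 2 := by
  intro y
  rw [← norm_sq_bergmanVector] at hext ⊢
  have hcs : ‖⟪bergmanVector ι ψ x, α⟫_ℂ‖ = ‖bergmanVector ι ψ x‖ := by
    rw [inner_bergmanVector]
    exact (pow_left_inj₀ (norm_nonneg _) (norm_nonneg _) two_ne_zero).mp hext
  have hy := norm_map_mul_norm_eq_of_norm_inner_eq_norm hα hcs (LinearMap.proj y ∘ₗ ι)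
  rw [norm_bergmanKernel_eq, ← mul_pow]
  exact congrArg (· ^ 2) hy.symm

/-- (Proposition "K is extremal".) Let `E` be a finite-dimensional inner product
space of functions on `X` (realized via an injective linear map `ι : E →ₗ[ℂ] (X → ℂ)`), with
orthonormal basis `(ψ_i)`, Bergman kernel `K(x,y) = Σ_i ψ_i(x) conj(ψ_i(y))` and Bergman function
`B(x) = Σ_i |ψ_i(x)|²`. If `α` is an extremal at `x`, i.e. `‖α‖ = 1` and `|α(x)|² = B(x)`, then
`|K(x,y)|² = |α(y)|² · B(x)` for every `y`. -/
theorem bergman_kernel_via_extremal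
    {X E : Type*} [NormedAddCommGroup E] [InnerProductSpace ℂ E]
    [FiniteDimensional ℂ E]
    (ι : E →ₗ[ℂ] (X → ℂ)) (hι : Function.Injective ι)
    {n : ℕ} (ψ : OrthonormalBasis (Fin n) ℂ E)
    (x : X) (α : E) (hα : ‖α‖ = 1)
    (hext : ‖ι α x‖ ^ 2 = ∑ i, ‖ι (ψ i) x‖ ^ 2) :
    ∀ y : X,
      ‖∑ i, ι (ψ i) x * (starRingEnd ℂ) (ι (ψ i) y)‖ ^ 2
        = ‖ι α y‖ ^ 2 * ∑ i, ‖ι (ψ i) x‖ ^ 2 :=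
  bergman_kernel_via_extremal_general ι ψ x α hα hext
end

section
/- Let (X, μ) be a measure space, H a finite-dimensional complex subspace of L²(X, μ; ℂ), P the orthogonal projection of L² onto H, and f, g : X → ℝ bounded measurable functions. Define the Toeplitz operators T_f := P ∘ M_f and T_g := P ∘ M_g on H, and for an orthonormal basis (ψ_i) of H with chosen measurable representatives set K(x,y) := Σ_i ψ_i(x) · conj(ψ_i(y)). Then the trace of T_f ∘ T_g equals ∫_X ∫_X f(x) g(y) |K(x,y)|² dμ(x) dμ(y). -/
/-!
In an orthonormal basis `ψ` of `H` the projections disappear against basis vectors, so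
`tr (T_f T_g) = ∑ i j ⟪ψ i, M_f ψ j⟫ ⟪ψ j, M_g ψ i⟫`. On the other side, expanding
`|K(x,y)|² = K(x,y) · conj K(x,y)` splits the double integral into the same finite sum of
products of single integrals. Each of these is an `L²` inner product `⟪ψ j, M ψ i⟫` with
`M = M_f` or `M_g`, which is also why every term is integrable.
-/

open MeasureTheory
open scoped InnerProductSpace ComplexConjugate

section TraceOfCompressions

variable {𝕜 E ι : Type*} [RCLike 𝕜] [NormedAddCommGroup E] [InnerProductSpace 𝕜 E] [Fintype ι]

theorem LinearMap.trace_comp_eq_sum_inner_mul (b : OrthonormalBasis ι 𝕜 E) (A B : E →ₗ[𝕜] E) :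
    LinearMap.trace 𝕜 E (A ∘ₗ B) = ∑ i, ∑ j, ⟪b i, A (b j)⟫_𝕜 * ⟪b j, B (b i)⟫_𝕜 := by
  rw [LinearMap.trace_eq_sum_inner _ b]
  refine Finset.sum_congr rfl fun i _ => ?_
  conv_lhs => rw [LinearMap.comp_apply, ← b.sum_repr' (B (b i))]
  simp only [map_sum, map_smul, inner_sum, inner_smul_right, mul_comm]

theorem Submodule.trace_compression_comp_compression (K : Submodule 𝕜 E)
    [K.HasOrthogonalProjection] (b : OrthonormalBasis ι 𝕜 K) (T S : E →ₗ[𝕜] E) :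
    LinearMap.trace 𝕜 K
        ((K.orthogonalProjectionOnto.toLinearMap ∘ₗ T ∘ₗ K.subtype) ∘ₗ
          (K.orthogonalProjectionOnto.toLinearMap ∘ₗ S ∘ₗ K.subtype))
      = ∑ i, ∑ j, ⟪(b i : E), T (b j)⟫_𝕜 * ⟪(b j : E), S (b i)⟫_𝕜 := by
  simp only [LinearMap.trace_comp_eq_sum_inner_mul b, LinearMap.comp_apply,
    ContinuousLinearMap.coe_coe, Submodule.subtype_apply,
    Submodule.inner_orthogonalProjectionOnto_eq_of_mem_left]

end TraceOfCompressions

section L2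

variable {X 𝕜 : Type*} [MeasurableSpace X] {μ : Measure X} [RCLike 𝕜]
  {α β : Lp 𝕜 2 μ} {a b : X → 𝕜}

theorem MeasureTheory.L2.integrable_mul_conj_of_ae_eq (ha : a =ᵐ[μ] α) (hb : b =ᵐ[μ] β) :
    Integrable (fun x => b x * conj (a x)) μ :=
  (L2.integrable_inner α β).congr <| by
    filter_upwards [ha, hb] with x hax hbx
    rw [RCLike.inner_apply, hax, hbx]

theorem MeasureTheory.L2.inner_eq_integral_mul_conj_of_ae_eq (ha : a =ᵐ[μ] α) (hb : b =ᵐ[μ] β) :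
    ⟪α, β⟫_𝕜 = ∫ x, b x * conj (a x) ∂μ := by
  rw [L2.inner_def]
  refine integral_congr_ae ?_
  filter_upwards [ha, hb] with x hax hbx
  rw [RCLike.inner_apply, hax, hbx]

theorem MeasureTheory.L2.mul_ae_eq_of_ae_eq {M : Lp 𝕜 2 μ →ₗ[𝕜] Lp 𝕜 2 μ} {m : X → 𝕜}
    (hM : ∀ γ : Lp 𝕜 2 μ, M γ =ᵐ[μ] fun x => m x * γ x) (hb : b =ᵐ[μ] β) :
    (fun x => m x * b x) =ᵐ[μ] M β := by
  filter_upwards [hM β, hb] with x hMx hbx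
  rw [hMx, hbx]

end L2

theorem MeasureTheory.integral_integral_sum_mul {X Y ι 𝕜 : Type*} [MeasurableSpace X]
    [MeasurableSpace Y] [RCLike 𝕜] {μ : Measure X} {ν : Measure Y} (s : Finset ι)
    {F : ι → X → 𝕜} {G : ι → Y → 𝕜} (hF : ∀ i ∈ s, Integrable (F i) μ)
    (hG : ∀ i ∈ s, Integrable (G i) ν) :
    ∫ y, ∫ x, ∑ i ∈ s, F i x * G i y ∂μ ∂ν = ∑ i ∈ s, (∫ x, F i x ∂μ) * ∫ y, G i y ∂ν := by
  have hinner : ∀ y, ∫ x, ∑ i ∈ s, F i x * G i y ∂μ = ∑ i ∈ s, (∫ x, F i x ∂μ) * G i y :=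
    fun y => by
      rw [integral_finsetSum s fun i hi => (hF i hi).mul_const _]
      simp only [integral_mul_const]
  simp only [hinner]
  rw [integral_finsetSum s fun i hi => (hG i hi).const_mul _]
  simp only [integral_const_mul]

theorem Complex.ofReal_mul_mul_norm_sum_mul_conj_sq {ι : Type*} [Fintype ι] (s t : ℝ)
    (a b : ι → ℂ) :
    ((s * t * ‖∑ i, a i * conj (b i)‖ ^ 2 : ℝ) : ℂ)
      = ∑ p : ι × ι, s * a p.1 * conj (a p.2) * (t * b p.2 * conj (b p.1)) := by
  rw [Complex.ofReal_mul, Complex.sq_norm, ← Complex.mul_conj, map_sum, Finset.sum_mul_sum,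
    Finset.mul_sum, Fintype.sum_prod_type]
  refine Finset.sum_congr rfl fun i _ => ?_
  rw [Finset.mul_sum]
  refine Finset.sum_congr rfl fun j _ => ?_
  simp only [map_mul, Complex.conj_conj, Complex.ofReal_mul]
  ring

theorem toeplitz_product_trace_eq_double_integral_general
    {X : Type*} [MeasurableSpace X] (μ : Measure X)
    (H : Submodule ℂ (Lp ℂ 2 μ)) [FiniteDimensional ℂ H]
    (f g : X → ℝ)
    (Mf Mg : Lp ℂ 2 μ →ₗ[ℂ] Lp ℂ 2 μ)
    (hMf : ∀ α : Lp ℂ 2 μ, ⇑(Mf α) =ᵐ[μ] fun x => (f x : ℂ) * α x)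
    (hMg : ∀ α : Lp ℂ 2 μ, ⇑(Mg α) =ᵐ[μ] fun x => (g x : ℂ) * α x)
    {n : ℕ} (ψ : OrthonormalBasis (Fin n) ℂ H)
    (ψrep : Fin n → X → ℂ)
    (hψ : ∀ i, ψrep i =ᵐ[μ] ⇑(ψ i : Lp ℂ 2 μ)) :
    LinearMap.trace ℂ H
        (((H.orthogonalProjection).toLinearMap ∘ₗ Mf ∘ₗ H.subtype) ∘ₗ
          ((H.orthogonalProjection).toLinearMap ∘ₗ Mg ∘ₗ H.subtype))
      = ((∫ y, ∫ x,
            f x * g y * ‖∑ i, ψrep i x * (starRingEnd ℂ) (ψrep i y)‖ ^ 2 ∂μ ∂μ : ℝ) : ℂ) := by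
  have hfψ i := L2.mul_ae_eq_of_ae_eq hMf (hψ i)
  have hgψ i := L2.mul_ae_eq_of_ae_eq hMg (hψ i)
  simp only [← integral_complex_ofReal, Complex.ofReal_mul_mul_norm_sum_mul_conj_sq]
  rw [integral_integral_sum_mul _
      (fun p _ => L2.integrable_mul_conj_of_ae_eq (hψ p.2) (hfψ p.1))
      (fun p _ => L2.integrable_mul_conj_of_ae_eq (hψ p.1) (hgψ p.2)),
    Submodule.trace_compression_comp_compression H ψ, Fintype.sum_prod_type, Finset.sum_comm]
  simp only [L2.inner_eq_integral_mul_conj_of_ae_eq (hψ _) (hfψ _),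
    L2.inner_eq_integral_mul_conj_of_ae_eq (hψ _) (hgψ _)]

/-- (Trace of a product of Toeplitz operators.) Let `H` be a finite-dimensional
subspace of `L²(X, μ; ℂ)`, `P` the orthogonal projection onto `H`, and `f, g` bounded measurable
real symbols with multiplication operators `M_f, M_g` on `L²`. Then the trace of
`T_f ∘ T_g = (P ∘ M_f) ∘ (P ∘ M_g) : H → H` equals
`∫∫ f(x) g(y) |K(x,y)|² dμ(x) dμ(y)`, where `K(x,y) = Σ_i ψ_i(x) conj(ψ_i(y))` is the Bergman
kernel built from measurable representatives of an orthonormal basis `(ψ_i)` of `H`. -/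
theorem toeplitz_product_trace_eq_double_integral
    {X : Type*} [MeasurableSpace X] (μ : Measure X)
    (H : Submodule ℂ (Lp ℂ 2 μ)) [FiniteDimensional ℂ H]
    (f g : X → ℝ) (hf_meas : Measurable f) (hg_meas : Measurable g)
    (Cf Cg : ℝ) (hf_bdd : ∀ x, |f x| ≤ Cf) (hg_bdd : ∀ x, |g x| ≤ Cg)
    (Mf Mg : Lp ℂ 2 μ →ₗ[ℂ] Lp ℂ 2 μ)
    (hMf : ∀ α : Lp ℂ 2 μ, ⇑(Mf α) =ᵐ[μ] fun x => (f x : ℂ) * α x)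
    (hMg : ∀ α : Lp ℂ 2 μ, ⇑(Mg α) =ᵐ[μ] fun x => (g x : ℂ) * α x)
    {n : ℕ} (ψ : OrthonormalBasis (Fin n) ℂ H)
    (ψrep : Fin n → X → ℂ) (hψ_meas : ∀ i, Measurable (ψrep i))
    (hψ : ∀ i, ψrep i =ᵐ[μ] ⇑(ψ i : Lp ℂ 2 μ)) :
    LinearMap.trace ℂ H
        (((H.orthogonalProjection).toLinearMap ∘ₗ Mf ∘ₗ H.subtype) ∘ₗ
          ((H.orthogonalProjection).toLinearMap ∘ₗ Mg ∘ₗ H.subtype))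
      = ((∫ y, ∫ x,
            f x * g y * ‖∑ i, ψrep i x * (starRingEnd ℂ) (ψrep i y)‖ ^ 2 ∂μ ∂μ : ℝ) : ℂ) :=
  toeplitz_product_trace_eq_double_integral_general μ H f g Mf Mg hMf hMg ψ ψrep hψ
end

section
/- Let n ≥ 1 and let λ : Fin n → ℝ with λ_i > 0 for all i, and set φ₀(z) := Σ_i λ_i |z_i|² for z ∈ ℂⁿ. Then for every entire function f : ℂⁿ → ℂ (holomorphic on all of ℂⁿ), |f(0)|² ≤ π^{−n} (Π_i λ_i) · ∫_{ℂⁿ} |f(w)|² e^{−φ₀(w)} dV(w), where dV is Lebesgue measure on ℂⁿ ≅ ℝ^{2n} and the integral may be infinite. -/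
/-!
For `n = 1` the mean value property applied to `f ^ 2` gives `|f 0|² ≤` the average of `|f|²` over
every circle about `0`. Integrating in polar coordinates against the radial weight
`e^{-λ r²} r dr dθ`, of total mass `π / λ`, gives `|f 0|² ≤ (λ / π) ∫ |f|² e^{-λ|z|²}`.
For general `n` the weight factors over the coordinates, so Tonelli's theorem and induction on `n`
(applying the one-variable bound in the first coordinate and the inductive hypothesis to each slice)
multiply the constants `λ_i / π`.
-/

open MeasureTheory Real Set
open scoped ENNReal

theorem norm_circleAverage_le_circleAverage_norm {E : Type*} [NormedAddCommGroup E]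
    [NormedSpace ℝ E] (f : ℂ → E) (c : ℂ) (R : ℝ) :
    ‖circleAverage f c R‖ ≤ circleAverage (fun z ↦ ‖f z‖) c R := by
  simp only [circleAverage_def, norm_smul, smul_eq_mul, Real.norm_eq_abs,
    abs_of_pos (inv_pos.2 two_pi_pos)]
  gcongr
  exact intervalIntegral.norm_integral_le_integral_norm two_pi_pos.le

theorem sq_norm_le_circleAverage_sq_norm {g : ℂ → ℂ} {c : ℂ} {R : ℝ}
    (hg : DiffContOnCl ℂ g (Metric.ball c |R|)) :
    ‖g c‖ ^ 2 ≤ circleAverage (fun z ↦ ‖g z‖ ^ 2) c R :=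
  calc ‖g c‖ ^ 2 = ‖circleAverage (fun z ↦ g z • g z) c R‖ := by
        rw [(hg.smul hg).circleAverage, smul_eq_mul, norm_mul, sq]
    _ ≤ _ := by
        simpa only [norm_smul, sq] using
          norm_circleAverage_le_circleAverage_norm (fun z ↦ g z • g z) c R

theorem setLIntegral_circleMap_Ioo_eq_circleAverage {h : ℂ → ℝ} (hc : Continuous h) (h0 : 0 ≤ h)
    (c : ℂ) (R : ℝ) :
    ∫⁻ θ in Ioo (-π) π, ENNReal.ofReal (h (circleMap c R θ)) =
      ENNReal.ofReal (2 * π * circleAverage h c R) := by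
  have hcR : Continuous fun θ ↦ h (circleMap c R θ) := by fun_prop
  rw [circleAverage_eq_integral_add (-π), intervalIntegral.integral_comp_add_right
      (fun θ ↦ h (circleMap c R θ)), smul_eq_mul, ← mul_assoc,
    mul_inv_cancel₀ two_pi_pos.ne', one_mul, zero_add, (by ring : 2 * π + -π = π),
    intervalIntegral.integral_of_le (by linarith [pi_pos]),
    ofReal_integral_eq_lintegral_ofReal (hcR.integrableOn_Icc.mono_set Ioc_subset_Icc_self)
      (.of_forall fun θ ↦ h0 _)]
  exact setLIntegral_congr Ioo_ae_eq_Ioc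

theorem Complex.polarCoord_symm_eq_circleMap (p : ℝ × ℝ) :
    Complex.polarCoord.symm p = circleMap 0 p.1 p.2 := by
  rw [Complex.polarCoord_symm_apply, circleMap_zero, Complex.exp_mul_I]
  push_cast
  ring

theorem lintegral_eq_lintegral_Ioi_circleAverage {h : ℂ → ℝ} (hc : Continuous h) (h0 : 0 ≤ h) :
    ∫⁻ z, ENNReal.ofReal (h z) =
      ∫⁻ r in Ioi 0, ENNReal.ofReal (2 * π * r * circleAverage h 0 r) := by
  rw [← Complex.lintegral_comp_polarCoord_symm, polarCoord_target, Measure.volume_eq_prod,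
    ← Measure.prod_restrict, lintegral_prod _
      (by simp only [Complex.polarCoord_symm_eq_circleMap]; fun_prop)]
  refine setLIntegral_congr_fun measurableSet_Ioi fun r hr ↦ ?_
  simp only [Complex.polarCoord_symm_eq_circleMap, smul_eq_mul]
  rw [lintegral_const_mul' _ _ ENNReal.ofReal_ne_top,
    setLIntegral_circleMap_Ioo_eq_circleAverage hc h0, ← ENNReal.ofReal_mul (le_of_lt hr)]
  ring_nf

theorem lintegral_Ioi_mul_exp_neg_mul_sq {b : ℝ} (hb : 0 < b) :
    ∫⁻ r in Ioi 0, ENNReal.ofReal (r * exp (-b * r ^ 2)) = ENNReal.ofReal (2 * b)⁻¹ := by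
  have h_integral : ∫ r in Ioi 0, r * exp (-b * r ^ 2) = (2 * b)⁻¹ := by
    apply Complex.ofReal_injective
    rw [← integral_complex_ofReal]
    push_cast
    exact integral_mul_cexp_neg_mul_sq (by simpa using hb)
  rw [← h_integral, ofReal_integral_eq_lintegral_ofReal
    (integrable_mul_exp_neg_mul_sq hb).integrableOn
    ((ae_restrict_iff' measurableSet_Ioi).2 (.of_forall fun r (hr : 0 < r) ↦ by positivity))]

theorem sq_norm_zero_le_mul_lintegral_exp_neg_mul_sq {g : ℂ → ℂ} (hg : Differentiable ℂ g)
    {lam : ℝ} (hlam : 0 < lam) :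
    ENNReal.ofReal (‖g 0‖ ^ 2) ≤
      ENNReal.ofReal (lam / π) * ∫⁻ z, ENNReal.ofReal (‖g z‖ ^ 2 * exp (-(lam * ‖z‖ ^ 2))) := by
  have h_avg (r : ℝ) : circleAverage (fun z ↦ ‖g z‖ ^ 2 * exp (-(lam * ‖z‖ ^ 2))) 0 r =
      exp (-lam * r ^ 2) * circleAverage (fun z ↦ ‖g z‖ ^ 2) 0 r := by
    rw [← smul_eq_mul, ← circleAverage_fun_smul]
    refine circleAverage_congr_sphere fun z hz ↦ ?_
    rw [mem_sphere_zero_iff_norm] at hz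
    rw [smul_eq_mul, hz, sq_abs]
    ring_nf
  calc ENNReal.ofReal (‖g 0‖ ^ 2)
      = ENNReal.ofReal (lam / π) *
          (ENNReal.ofReal (2 * lam)⁻¹ * ENNReal.ofReal (2 * π * ‖g 0‖ ^ 2)) := by
        rw [← ENNReal.ofReal_mul (by positivity), ← ENNReal.ofReal_mul (by positivity)]
        congr 1
        field_simp
    _ = ENNReal.ofReal (lam / π) * ∫⁻ r in Ioi 0,
          ENNReal.ofReal (r * exp (-lam * r ^ 2)) * ENNReal.ofReal (2 * π * ‖g 0‖ ^ 2) := by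
        rw [lintegral_mul_const' _ _ ENNReal.ofReal_ne_top, lintegral_Ioi_mul_exp_neg_mul_sq hlam]
    _ ≤ ENNReal.ofReal (lam / π) * ∫⁻ r in Ioi 0, ENNReal.ofReal
          (2 * π * r * circleAverage (fun z ↦ ‖g z‖ ^ 2 * exp (-(lam * ‖z‖ ^ 2))) 0 r) := by
        gcongr ENNReal.ofReal (lam / π) * ?_
        refine setLIntegral_mono' measurableSet_Ioi fun r (hr : 0 < r) ↦ ?_
        rw [← ENNReal.ofReal_mul (by positivity), h_avg]
        refine ENNReal.ofReal_le_ofReal ?_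
        have h_mean := sq_norm_le_circleAverage_sq_norm (c := 0) (R := r) hg.diffContOnCl
        calc r * exp (-lam * r ^ 2) * (2 * π * ‖g 0‖ ^ 2)
            = 2 * π * r * exp (-lam * r ^ 2) * ‖g 0‖ ^ 2 := by ring
          _ ≤ 2 * π * r * exp (-lam * r ^ 2) * circleAverage (fun z ↦ ‖g z‖ ^ 2) 0 r := by
            gcongr
          _ = _ := by ring
    _ = _ := by
        rw [lintegral_eq_lintegral_Ioi_circleAverage
          (h := fun z ↦ ‖g z‖ ^ 2 * exp (-(lam * ‖z‖ ^ 2)))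
          ((hg.continuous.norm.pow 2).mul (by fun_prop)) fun z ↦ by positivity]

theorem lintegral_fin_succ_cons {α : Type*} [MeasureSpace α] [SigmaFinite (volume : Measure α)]
    {n : ℕ} {F : (Fin (n + 1) → α) → ℝ≥0∞} (hF : Measurable F) :
    ∫⁻ w, F w = ∫⁻ z, ∫⁻ w', F (Fin.cons z w') := by
  let e := (MeasurableEquiv.piFinSuccAbove (fun _ : Fin (n + 1) ↦ α) 0).symm
  rw [← ((volume_preserving_piFinSuccAbove _ 0).symm).lintegral_comp_emb e.measurableEmbedding,
    Measure.volume_eq_prod, lintegral_prod (fun p ↦ F (e p)) (hF.comp e.measurable).aemeasurable]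
  simp [e, MeasurableEquiv.piFinSuccAbove_symm_apply, Fin.insertNthEquiv, Fin.insertNth_zero']

theorem lintegral_mul_exp_neg_sum_mul_sq_fin_succ {n : ℕ} (lam : Fin (n + 1) → ℝ)
    {h : (Fin (n + 1) → ℂ) → ℝ} (hh : Measurable h) :
    ∫⁻ w, ENNReal.ofReal (h w * exp (-(∑ i, lam i * ‖w i‖ ^ 2))) =
      ∫⁻ z, ENNReal.ofReal (exp (-(lam 0 * ‖z‖ ^ 2))) *
        ∫⁻ w, ENNReal.ofReal (h (Fin.cons z w) * exp (-(∑ j : Fin n, lam j.succ * ‖w j‖ ^ 2))) := by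
  rw [lintegral_fin_succ_cons (by fun_prop)]
  refine lintegral_congr fun z ↦ ?_
  rw [← lintegral_const_mul' _ _ ENNReal.ofReal_ne_top]
  refine lintegral_congr fun w ↦ ?_
  rw [← ENNReal.ofReal_mul (exp_pos _).le]
  simp only [Fin.sum_univ_succ, Fin.cons_zero, Fin.cons_succ, neg_add, exp_add]
  ring_nf

theorem model_bergman_pointwise_bound_general
    {n : ℕ} (lam : Fin n → ℝ) (hlam : ∀ i, 0 < lam i)
    (f : (Fin n → ℂ) → ℂ) (hf : Differentiable ℂ f) :
    ENNReal.ofReal (‖f 0‖ ^ 2)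
      ≤ ENNReal.ofReal ((∏ i, lam i) / Real.pi ^ n) *
          ∫⁻ w, ENNReal.ofReal (‖f w‖ ^ 2 * Real.exp (-(∑ i, lam i * ‖w i‖ ^ 2))) ∂volume := by
  induction n with
  | zero => simp [Measure.volume_pi_eq_dirac 0]
  | succ n ih =>
    have h_const : ENNReal.ofReal ((∏ i, lam i) / π ^ (n + 1)) =
        ENNReal.ofReal (lam 0 / π) * ENNReal.ofReal ((∏ j : Fin n, lam j.succ) / π ^ n) := by
      rw [← ENNReal.ofReal_mul (div_nonneg (hlam 0).le pi_pos.le), Fin.prod_univ_succ, pow_succ]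
      ring_nf
    calc ENNReal.ofReal (‖f 0‖ ^ 2) = ENNReal.ofReal (‖f (Fin.cons 0 0)‖ ^ 2) := by
          rw [← Fin.cons_self_tail (0 : Fin (n + 1) → ℂ)]
          rfl
      _ ≤ ENNReal.ofReal (lam 0 / π) *
            ∫⁻ z, ENNReal.ofReal (‖f (Fin.cons z 0)‖ ^ 2 * exp (-(lam 0 * ‖z‖ ^ 2))) :=
          sq_norm_zero_le_mul_lintegral_exp_neg_mul_sq (hf.comp (by fun_prop)) (hlam 0)
      _ ≤ ENNReal.ofReal (lam 0 / π) * ∫⁻ z, ENNReal.ofReal (exp (-(lam 0 * ‖z‖ ^ 2))) *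
            (ENNReal.ofReal ((∏ j : Fin n, lam j.succ) / π ^ n) * ∫⁻ w, ENNReal.ofReal
              (‖f (Fin.cons z w)‖ ^ 2 * exp (-(∑ j : Fin n, lam j.succ * ‖w j‖ ^ 2)))) := by
          gcongr with z
          rw [mul_comm, ENNReal.ofReal_mul (by positivity)]
          gcongr
          exact ih _ (fun j ↦ hlam j.succ) _ (hf.comp (by fun_prop))
      _ = _ := by
          simp_rw [mul_left_comm (ENNReal.ofReal (exp _))]
          rw [lintegral_const_mul' _ _ ENNReal.ofReal_ne_top, h_const, mul_assoc,
            lintegral_mul_exp_neg_sum_mul_sq_fin_succ lam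
              (hf.continuous.measurable.norm.pow_const 2)]

/-- (Model pointwise bound with the sharp constant.) Let
`φ₀(z) = Σ_i λ_i |z_i|²` on `ℂⁿ` with all `λ_i > 0`. Then every entire function `f` on `ℂⁿ`
satisfies `|f(0)|² ≤ π^{-n} (Π_i λ_i) ∫_{ℂⁿ} |f|² e^{-φ₀} dV` (the integral may be infinite). -/
theorem model_bergman_pointwise_bound
    {n : ℕ} (hn : 1 ≤ n) (lam : Fin n → ℝ) (hlam : ∀ i, 0 < lam i)
    (f : (Fin n → ℂ) → ℂ) (hf : Differentiable ℂ f) :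
    ENNReal.ofReal (‖f 0‖ ^ 2)
      ≤ ENNReal.ofReal ((∏ i, lam i) / Real.pi ^ n) *
          ∫⁻ w, ENNReal.ofReal (‖f w‖ ^ 2 * Real.exp (-(∑ i, lam i * ‖w i‖ ^ 2))) ∂volume :=
  model_bergman_pointwise_bound_general lam hlam f hf
end

section
/- Let n ≥ 1 and let λ : Fin n → ℝ with λ_i ≤ 0 for some index i, and set φ₀(z) := Σ_j λ_j |z_j|² for z ∈ ℂⁿ. If f : ℂⁿ → ℂ is an entire function with ∫_{ℂⁿ} |f(w)|² e^{−φ₀(w)} dV(w) < ∞, then f is identically zero. -/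
/-!
Pick `i` with `λ_i ≤ 0` and split `w = (ζ, y)` with `ζ = w_i`. Since `-λ_i |ζ|² ≥ 0`, the weight
`e^{-φ₀(ζ, y)}` is bounded below by a positive constant on each complex line `ζ ↦ (ζ, y)`, so by
Fubini, for almost every `y` the entire function `ζ ↦ f (ζ, y)` lies in `L²(ℂ)`.

An entire `g` with `g c ≠ 0` is not in any `L^p(ℂ)`: by the mean value property applied to `g^p`,
every circle about `c` carries `|g|^p`-mass at least `2π |g c|^p`, and integrating over the radius
in polar coordinates gives `∫ |g|^p ≥ 2π |g c|^p ∫₀^∞ r dr = ∞`. Hence `f` vanishes on almost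
every line, so almost everywhere, and by continuity everywhere.
-/

open MeasureTheory Real Set
open scoped ENNReal

theorem Differentiable.norm_le_circleAverage_norm {E : Type*} [NormedAddCommGroup E]
    [NormedSpace ℂ E] [CompleteSpace E] {f : ℂ → E} (hf : Differentiable ℂ f) (c : ℂ) (R : ℝ) :
    ‖f c‖ ≤ circleAverage (‖f ·‖) c R := by
  rw [← hf.diffContOnCl.circleAverage, circleAverage_def, circleAverage_def, norm_smul,
    smul_eq_mul, Real.norm_of_nonneg (by positivity)]
  gcongr
  exact intervalIntegral.norm_integral_le_integral_norm (by positivity)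

theorem Continuous.ofReal_two_pi_mul_circleAverage {f : ℂ → ℝ} (hf : Continuous f)
    (hf₀ : 0 ≤ f) (c : ℂ) (R : ℝ) :
    ENNReal.ofReal (2 * π * circleAverage f c R) =
      ∫⁻ θ in Ioo (-π) π, ENNReal.ofReal (f (circleMap c R θ)) := by
  have hfc : Continuous fun θ => f (circleMap c R θ) := hf.comp (continuous_circleMap c R)
  rw [circleAverage_eq_integral_add (-π), intervalIntegral.integral_comp_add_right
    (fun θ => f (circleMap c R θ)), smul_eq_mul, ← mul_assoc, mul_inv_cancel₀ (by positivity),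
    one_mul, zero_add, show 2 * π + -π = π by ring,
    intervalIntegral.integral_of_le (by linarith [pi_pos]),
    ofReal_integral_eq_lintegral_ofReal hfc.integrableOn_Ioc (.of_forall fun θ => hf₀ _)]
  exact setLIntegral_congr Ioo_ae_eq_Ioc.symm

theorem lintegral_eq_lintegral_Ioi_mul_lintegral_circleMap {F : ℂ → ℝ≥0∞} (hF : Measurable F)
    (c : ℂ) :
    ∫⁻ z, F z = ∫⁻ r in Ioi 0, ENNReal.ofReal r * ∫⁻ θ in Ioo (-π) π, F (circleMap c r θ) := by
  have hpolar : ∀ p : ℝ × ℝ, c + Complex.polarCoord.symm p = circleMap c p.1 p.2 := by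
    intro p
    simp [circleMap, Complex.exp_mul_I]
  rw [← lintegral_add_left_eq_self F c, ← Complex.lintegral_comp_polarCoord_symm,
    polarCoord_target, Measure.volume_eq_prod, ← Measure.prod_restrict]
  simp_rw [hpolar, smul_eq_mul]
  rw [lintegral_prod _ (by fun_prop)]
  exact lintegral_congr fun r => lintegral_const_mul' _ _ ENNReal.ofReal_ne_top

theorem lintegral_Ioi_ofReal_eq_top : ∫⁻ r in Ioi (0 : ℝ), ENNReal.ofReal r = ⊤ := by
  refine top_unique ?_
  calc ⊤ = ∫⁻ r in Ioi (1 : ℝ), 1 := by simp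
    _ ≤ ∫⁻ r in Ioi (1 : ℝ), ENNReal.ofReal r :=
        setLIntegral_mono measurable_id.ennreal_ofReal fun r hr => ENNReal.one_le_ofReal.2 hr.le
    _ ≤ ∫⁻ r in Ioi (0 : ℝ), ENNReal.ofReal r := lintegral_mono_set (Ioi_subset_Ioi zero_le_one)

theorem lintegral_eq_top_of_le_lintegral_circleMap {F : ℂ → ℝ≥0∞} (hF : Measurable F) {c : ℂ}
    {K : ℝ≥0∞} (hK : K ≠ 0) (h : ∀ r, K ≤ ∫⁻ θ in Ioo (-π) π, F (circleMap c r θ)) :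
    ∫⁻ z, F z = ⊤ :=
  top_unique <| calc
    ⊤ = ∫⁻ r in Ioi 0, ENNReal.ofReal r * K := by
      rw [lintegral_mul_const _ ENNReal.measurable_ofReal, lintegral_Ioi_ofReal_eq_top,
        ENNReal.top_mul hK]
    _ ≤ ∫⁻ r in Ioi 0, ENNReal.ofReal r * ∫⁻ θ in Ioo (-π) π, F (circleMap c r θ) :=
      lintegral_mono fun r => by gcongr; exact h r
    _ = ∫⁻ z, F z := (lintegral_eq_lintegral_Ioi_mul_lintegral_circleMap hF c).symm

theorem Differentiable.eq_zero_of_lintegral_norm_pow_lt_top {g : ℂ → ℂ} (hg : Differentiable ℂ g)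
    {p : ℕ} (h : ∫⁻ z, ENNReal.ofReal (‖g z‖ ^ p) < ⊤) : g = 0 := by
  funext c
  by_contra hc
  rw [Pi.zero_apply] at hc
  have hgp : Continuous fun z => ‖g z‖ ^ p := hg.continuous.norm.pow p
  refine h.ne (lintegral_eq_top_of_le_lintegral_circleMap hgp.measurable.ennreal_ofReal
    (c := c) (K := ENNReal.ofReal (2 * π * ‖g c‖ ^ p)) (by simp [pi_pos, hc]) fun r => ?_)
  rw [← hgp.ofReal_two_pi_mul_circleAverage (fun z => by positivity)]
  gcongr
  simpa [norm_pow] using (hg.pow p).norm_le_circleAverage_norm c r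

theorem differentiable_finInsertNth {𝕜 E : Type*} [NontriviallyNormedField 𝕜]
    [NormedAddCommGroup E] [NormedSpace 𝕜 E] {m : ℕ} (i : Fin (m + 1)) (y : Fin m → E) :
    Differentiable 𝕜 fun x : E => (i.insertNth x y : Fin (m + 1) → E) := by
  refine differentiable_pi.2 fun j => ?_
  induction j using Fin.succAboveCases i <;> simp

theorem sum_mul_norm_sq_insertNth_le {E : Type*} [SeminormedAddCommGroup E] {m : ℕ}
    {lam : Fin (m + 1) → ℝ} {i : Fin (m + 1)} (hi : lam i ≤ 0) (x : E) (y : Fin m → E) :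
    ∑ j, lam j * ‖(i.insertNth x y : Fin (m + 1) → E) j‖ ^ 2 ≤
      ∑ j, lam (i.succAbove j) * ‖y j‖ ^ 2 := by
  rw [Fin.sum_univ_succAbove _ i]
  simp only [Fin.insertNth_apply_same, Fin.insertNth_apply_succAbove]
  nlinarith [sq_nonneg ‖x‖]

theorem lintegral_ofReal_lt_top_of_lintegral_mul_exp_neg_lt_top {X : Type*} [MeasurableSpace X]
    {μ : Measure X} {u ψ : X → ℝ} {S : ℝ} (hu : 0 ≤ u) (hψ : ∀ x, ψ x ≤ S)
    (h : ∫⁻ x, ENNReal.ofReal (u x * exp (-ψ x)) ∂μ < ⊤) : ∫⁻ x, ENNReal.ofReal (u x) ∂μ < ⊤ :=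
  calc ∫⁻ x, ENNReal.ofReal (u x) ∂μ
      ≤ ∫⁻ x, ENNReal.ofReal (exp S) * ENNReal.ofReal (u x * exp (-ψ x)) ∂μ := by
        refine lintegral_mono fun x => ?_
        rw [← ENNReal.ofReal_mul (exp_pos S).le]
        refine ENNReal.ofReal_le_ofReal ?_
        have : 1 ≤ exp S * exp (-ψ x) := by
          rw [← exp_add]; exact one_le_exp (by linarith [hψ x])
        exact (le_mul_of_one_le_right (hu x) this).trans_eq (by ring)
    _ = ENNReal.ofReal (exp S) * ∫⁻ x, ENNReal.ofReal (u x * exp (-ψ x)) ∂μ :=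
        lintegral_const_mul' _ _ ENNReal.ofReal_ne_top
    _ < ⊤ := ENNReal.mul_lt_top ENNReal.ofReal_lt_top h

section Slices

variable {m : ℕ} {α : Type*} [MeasureSpace α] [SigmaFinite (volume : Measure α)] (i : Fin (m + 1))

theorem ae_lintegral_insertNth_lt_top {F : (Fin (m + 1) → α) → ℝ≥0∞} (hF : Measurable F)
    (h : ∫⁻ w, F w < ⊤) : ∀ᵐ y : Fin m → α, ∫⁻ x, F (i.insertNth x y) < ⊤ := by
  set e := MeasurableEquiv.piFinSuccAbove (fun _ => α) i
  have hmp : MeasurePreserving e.symm := (volume_preserving_piFinSuccAbove (fun _ => α) i).symm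
  have hFe : Measurable fun z => F (e.symm z) := hF.comp hmp.measurable
  rw [← hmp.lintegral_comp hF, Measure.volume_eq_prod,
    lintegral_prod_symm _ hFe.aemeasurable] at h
  exact ae_lt_top hFe.lintegral_prod_left' h.ne

theorem ae_of_ae_forall_insertNth {P : (Fin (m + 1) → α) → Prop} (hP : MeasurableSet {w | P w})
    (h : ∀ᵐ y : Fin m → α, ∀ x, P (i.insertNth x y)) : ∀ᵐ w, P w := by
  set e := MeasurableEquiv.piFinSuccAbove (fun _ => α) i
  have hmp : MeasurePreserving e.symm := (volume_preserving_piFinSuccAbove (fun _ => α) i).symm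
  rw [← hmp.map_eq, ae_map_iff hmp.measurable.aemeasurable hP, Measure.volume_eq_prod,
    Measure.ae_prod_iff_ae_ae (p := fun z => P (e.symm z)) (hmp.measurable hP)]
  exact Filter.Eventually.of_forall fun x => h.mono fun y hy => hy x

end Slices

theorem model_bergman_space_trivial_of_nonpositive_eigenvalue_general
    {n : ℕ} (lam : Fin n → ℝ) (hlam : ∃ i, lam i ≤ 0)
    (f : (Fin n → ℂ) → ℂ) (hf : Differentiable ℂ f)
    (hint : ∫⁻ w, ENNReal.ofReal (‖f w‖ ^ 2 * Real.exp (-(∑ j, lam j * ‖w j‖ ^ 2))) ∂volume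
        < ⊤) :
    f = 0 := by
  obtain ⟨i, hi⟩ := hlam
  obtain ⟨m, rfl⟩ := Nat.exists_eq_add_one_of_ne_zero i.pos.ne'
  have hfc := hf.continuous
  have hslices := ae_lintegral_insertNth_lt_top i (by fun_prop) hint
  have hzero : ∀ᵐ y : Fin m → ℂ, ∀ ζ, f (i.insertNth ζ y) = 0 := hslices.mono fun y hy =>
    congrFun ((hf.comp (differentiable_finInsertNth i y)).eq_zero_of_lintegral_norm_pow_lt_top
      (lintegral_ofReal_lt_top_of_lintegral_mul_exp_neg_lt_top (fun _ => by positivity)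
        (sum_mul_norm_sq_insertNth_le hi · y) hy))
  exact (Continuous.ae_eq_iff_eq volume hfc continuous_const).1
    (ae_of_ae_forall_insertNth i (measurableSet_eq_fun hfc.measurable measurable_const) hzero)

/-- (Triviality of the model weighted Bergman space outside `X(0)`.) Let
`φ₀(z) = Σ_j λ_j |z_j|²` on `ℂⁿ` with `λ_i ≤ 0` for some index `i`. Then every entire function
`f` on `ℂⁿ` with `∫_{ℂⁿ} |f|² e^{-φ₀} dV < ∞` vanishes identically. -/
theorem model_bergman_space_trivial_of_nonpositive_eigenvalue
    {n : ℕ} (hn : 1 ≤ n) (lam : Fin n → ℝ) (hlam : ∃ i, lam i ≤ 0)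
    (f : (Fin n → ℂ) → ℂ) (hf : Differentiable ℂ f)
    (hint : ∫⁻ w, ENNReal.ofReal (‖f w‖ ^ 2 * Real.exp (-(∑ j, lam j * ‖w j‖ ^ 2))) ∂volume
        < ⊤) :
    f = 0 :=
  model_bergman_space_trivial_of_nonpositive_eigenvalue_general lam hlam f hf hint
end
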